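/- arXiv:2506.23959 — 5 statements merged into one kernel-verified Lean document; each statement's English description precedes it below -/
import Mathlib

section
/- Define two sequences of polynomials p^x_n, p^y_n ∈ ℤ[x,y] by p^x_0 = p^y_0 = 1, p^x_1 = x, p^y_1 = y, and p^x_{n+1} = x·p^y_n − p^x_{n−1}, p^y_{n+1} = y·p^x_n − p^y_{n−1} (with p^x_{−1} = p^y_{−1} = 0). Then for all n ≥ 1, p^x_n·p^y_{n−2} = p^x_{n−1}·p^y_{n−1} − 1 = p^y_n·p^x_{n−2}. -/
/-! Expanding `p^x` by its recurrence in both `p^x_{n+1} p^y_{n-1}` and `p^x_n p^y_n`, the terms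
`x p^y_n p^y_{n-1}` cancel, so the first identity at `n + 1` is the second one at `n`, and
symmetrically. Both identities therefore follow by a simultaneous induction from `n = 1`. -/

/-- The pair of two-coloured quantum integers, with indices shifted by one so that
`tc x y (n+1) = (p^x_n, p^y_n)`; in particular `tc x y 0 = (p^x_{-1}, p^y_{-1}) = (0,0)`,
`tc x y 1 = (p^x_0, p^y_0) = (1,1)` and `tc x y 2 = (p^x_1, p^y_1) = (x,y)`.
The recurrence is `p^x_{n+1} = x·p^y_n − p^x_{n−1}`, `p^y_{n+1} = y·p^x_n − p^y_{n−1}`. -/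
def tc (x y : ℝ) : ℕ → ℝ × ℝ
  | 0 => (0, 0)
  | 1 => (1, 1)
  | n + 2 => (x * (tc x y (n + 1)).2 - (tc x y n).1,
              y * (tc x y (n + 1)).1 - (tc x y n).2)

/-- `px x y (n+1) = p^x_n`. -/
def px (x y : ℝ) (n : ℕ) : ℝ := (tc x y n).1

/-- `py x y (n+1) = p^y_n`. -/
def py (x y : ℝ) (n : ℕ) : ℝ := (tc x y n).2

section

variable (x y : ℝ)

@[simp] lemma px_zero : px x y 0 = 0 := rfl

@[simp] lemma py_zero : py x y 0 = 0 := rfl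

@[simp] lemma px_one : px x y 1 = 1 := rfl

@[simp] lemma py_one : py x y 1 = 1 := rfl

lemma px_add_two (n : ℕ) : px x y (n + 2) = x * py x y (n + 1) - px x y n := rfl

lemma py_add_two (n : ℕ) : py x y (n + 2) = y * px x y (n + 1) - py x y n := rfl

lemma px_add_two_mul_py_and_py_add_two_mul_px (n : ℕ) :
    px x y (n + 2) * py x y n = px x y (n + 1) * py x y (n + 1) - 1 ∧
    py x y (n + 2) * px x y n = px x y (n + 1) * py x y (n + 1) - 1 := by
  induction n with
  | zero => simp
  | succ n ih =>
    obtain ⟨hx, hy⟩ := ih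
    constructor
    · rw [px_add_two, px_add_two x y n]
      linear_combination hy
    · rw [py_add_two, py_add_two x y n]
      linear_combination hx

end

/-- For all `n ≥ 1`: `p^x_n · p^y_{n−2} = p^x_{n−1} · p^y_{n−1} − 1 = p^y_n · p^x_{n−2}`
(stated with the shift by one, so `px (n+1)` is `p^x_n` etc.). -/
theorem two_coloured_frieze_rec (x y : ℝ) (n : ℕ) (hn : 1 ≤ n) :
    px x y (n + 1) * py x y (n - 1) = px x y n * py x y n - 1 ∧
    py x y (n + 1) * px x y (n - 1) = px x y n * py x y n - 1 := by
  obtain ⟨m, rfl⟩ := Nat.exists_eq_add_of_le' hn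
  exact px_add_two_mul_py_and_py_add_two_mul_px x y m
end

section
/- Suppose x₁, x₃, x₄, x₂, y₁, y₃, y₄, y₂ are positive reals satisfying the 2-periodic D_4 frieze equations: x₁y₁ = x₃y₃ = x₄y₄ = x₂ + 1 = y₂ + 1 and x₂y₂ = x₁x₃x₄ + 1 = y₁y₃y₄ + 1. Then x₂ = y₂ = 3, x₁y₁ = x₃y₃ = x₄y₄ = 4, and x₁x₃x₄ = y₁y₃y₄ = 8. -/
/-! With `a = x₂ = y₂` and `P = x₁x₃x₄ = y₁y₃y₄`, the product `P² = P · y₁y₃y₄` regroups as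
`(x₁y₁)(x₃y₃)(x₄y₄) = (a + 1)³`, while `P = a² - 1`. Hence `(a + 1)² a (a - 3) = 0`, and
positivity of `a` leaves `a = 3`; everything else follows linearly. -/

theorem eq_neg_one_or_eq_zero_or_eq_three_of_sq_sub_one_sq_eq {R : Type*} [CommRing R]
    [IsDomain R] {a : R} (h : (a ^ 2 - 1) ^ 2 = (a + 1) ^ 3) : a = -1 ∨ a = 0 ∨ a = 3 := by
  have hfactor : (a + 1) ^ 2 * a * (a - 3) = 0 := by linear_combination h
  rcases mul_eq_zero.1 hfactor with h' | h'
  · rcases mul_eq_zero.1 h' with h'' | h''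
    · exact .inl (eq_neg_of_add_eq_zero_left (pow_eq_zero_iff two_ne_zero |>.1 h''))
    · exact .inr (.inl h'')
  · exact .inr (.inr (sub_eq_zero.1 h'))

theorem D4_frieze_general (x₁ x₂ x₃ x₄ y₁ y₂ y₃ y₄ : ℝ)
    (hx₂ : 0 < x₂)
    (h1 : x₁ * y₁ = x₃ * y₃) (h2 : x₃ * y₃ = x₄ * y₄)
    (h3 : x₄ * y₄ = x₂ + 1) (h4 : x₂ + 1 = y₂ + 1)
    (h5 : x₂ * y₂ = x₁ * x₃ * x₄ + 1) (h6 : x₁ * x₃ * x₄ + 1 = y₁ * y₃ * y₄ + 1) :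
    x₂ = 3 ∧ y₂ = 3 ∧ x₁ * y₁ = 4 ∧ x₃ * y₃ = 4 ∧ x₄ * y₄ = 4 ∧
    x₁ * x₃ * x₄ = 8 ∧ y₁ * y₃ * y₄ = 8 := by
  have hy₂ : y₂ = x₂ := by linarith
  have hP : x₁ * x₃ * x₄ = x₂ ^ 2 - 1 := by rw [hy₂] at h5; linear_combination -h5
  have hsq : (x₂ ^ 2 - 1) ^ 2 = (x₂ + 1) ^ 3 := by
    calc (x₂ ^ 2 - 1) ^ 2 = (x₁ * x₃ * x₄) * (y₁ * y₃ * y₄) := by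
          rw [← hP, ← add_right_cancel h6]; ring
      _ = (x₁ * y₁) * (x₃ * y₃) * (x₄ * y₄) := by ring
      _ = (x₂ + 1) ^ 3 := by rw [h1, h2, h3]; ring
  obtain hx | hx | rfl := eq_neg_one_or_eq_zero_or_eq_three_of_sq_sub_one_sq_eq hsq
  · linarith
  · linarith
  refine ⟨rfl, by linarith, by linarith, by linarith, by linarith, by linarith, by linarith⟩

/-- The 2-periodic `D₄` frieze equations in positive reals force `x₂ = y₂ = 3`,
`x₁y₁ = x₃y₃ = x₄y₄ = 4` and `x₁x₃x₄ = y₁y₃y₄ = 8`. -/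
theorem D4_frieze (x₁ x₂ x₃ x₄ y₁ y₂ y₃ y₄ : ℝ)
    (hx₁ : 0 < x₁) (hx₂ : 0 < x₂) (hx₃ : 0 < x₃) (hx₄ : 0 < x₄)
    (hy₁ : 0 < y₁) (hy₂ : 0 < y₂) (hy₃ : 0 < y₃) (hy₄ : 0 < y₄)
    (h1 : x₁ * y₁ = x₃ * y₃) (h2 : x₃ * y₃ = x₄ * y₄)
    (h3 : x₄ * y₄ = x₂ + 1) (h4 : x₂ + 1 = y₂ + 1)
    (h5 : x₂ * y₂ = x₁ * x₃ * x₄ + 1) (h6 : x₁ * x₃ * x₄ + 1 = y₁ * y₃ * y₄ + 1) :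
    x₂ = 3 ∧ y₂ = 3 ∧ x₁ * y₁ = 4 ∧ x₃ * y₃ = 4 ∧ x₄ * y₄ = 4 ∧
    x₁ * x₃ * x₄ = 8 ∧ y₁ * y₃ * y₄ = 8 :=
  D4_frieze_general x₁ x₂ x₃ x₄ y₁ y₂ y₃ y₄ hx₂ h1 h2 h3 h4 h5 h6
end

section
/- Let m ≥ 1 and let c_0, c_2, …, c_{2m} be positive reals with c_0 = 1 satisfying (c_{2m}² − 1)² = (c_{2m} + 1)²·(c_{2m}·c_{2m−2} + 1) and (c_{2k}² − 1)² = (c_{2k+2}·c_{2k} + 1)·(c_{2k}·c_{2k−2} + 1) for 1 ≤ k ≤ m−1. Then c_{2k} = 2k + 1 for all 0 ≤ k ≤ m. -/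
/-!
Since `(x² - 1)² = (x + 1)² (x - 1)²`, the top relation says `(c_m - 1)² = c_m c_{m-1} + 1`,
i.e. `c_{m-1} = c_m - 2`. Once `c_{k+1} = c_k + 2`, the factor `c_{k+1} c_k + 1` of the middle
relation at `k` becomes `(c_k + 1)²` and the same cancellation gives `c_{k-1} = c_k - 2`. So the
layers form an arithmetic progression of step `2` starting at `c_0 = 1`.
-/

lemma eq_sub_two_of_sq_sub_one_sq_eq {x y : ℝ} (hx : 0 < x)
    (h : (x ^ 2 - 1) ^ 2 = ((x + 2) * x + 1) * (x * y + 1)) : y = x - 2 := by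
  have hfactor : (x + 1) ^ 2 * (x * (x - 2 - y)) = 0 := by linear_combination h
  have hx1 : (x + 1) ^ 2 ≠ 0 := by positivity
  have hxy : x * (x - 2 - y) = 0 := (mul_eq_zero.mp hfactor).resolve_left hx1
  linarith [(mul_eq_zero.mp hxy).resolve_left hx.ne']

lemma succ_eq_add_two_of_frieze_relations {m : ℕ} (hm : 1 ≤ m) {c : ℕ → ℝ}
    (hpos : ∀ k ≤ m, 0 < c k)
    (htop : ((c m) ^ 2 - 1) ^ 2 = (c m + 1) ^ 2 * (c m * c (m - 1) + 1))
    (hmid : ∀ k, 1 ≤ k → k ≤ m - 1 →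
      ((c k) ^ 2 - 1) ^ 2 = (c (k + 1) * c k + 1) * (c k * c (k - 1) + 1)) :
    ∀ k < m, c (k + 1) = c k + 2 := by
  obtain ⟨n, rfl⟩ : ∃ n, m = n + 1 := ⟨m - 1, by omega⟩
  simp only [Nat.add_sub_cancel] at htop hmid
  intro k hk
  induction Nat.le_of_lt_succ hk using Nat.decreasingInduction with
  | self =>
    have h := eq_sub_two_of_sq_sub_one_sq_eq (y := c n) (hpos (n + 1) le_rfl) (by linear_combination htop)
    linarith
  | of_succ k hkn ih =>
    have h := hmid (k + 1) (by omega) hkn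
    rw [ih (by omega), Nat.add_sub_cancel] at h
    linarith [eq_sub_two_of_sq_sub_one_sq_eq (hpos (k + 1) (by omega)) h]

lemma eq_add_two_mul_of_succ_eq_add_two {m : ℕ} {c : ℕ → ℝ}
    (hstep : ∀ k < m, c (k + 1) = c k + 2) : ∀ k ≤ m, c k = c 0 + 2 * k := by
  intro k hk
  induction k with
  | zero => simp
  | succ k ih =>
    rw [hstep k hk, ih (by omega)]
    push_cast
    ring

/-- The equations for the even constant layers of a 2-periodic positive frieze of type
`D_{2m+2}`: here `c k` stands for `c_{2k}`, with `c 0 = 1`. These force `c_{2k} = 2k+1`. -/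
theorem Deven_constant_layers (m : ℕ) (hm : 1 ≤ m) (c : ℕ → ℝ)
    (hpos : ∀ k ≤ m, 0 < c k) (h0 : c 0 = 1)
    (htop : ((c m) ^ 2 - 1) ^ 2 = (c m + 1) ^ 2 * (c m * c (m - 1) + 1))
    (hmid : ∀ k, 1 ≤ k → k ≤ m - 1 →
      ((c k) ^ 2 - 1) ^ 2 = (c (k + 1) * c k + 1) * (c k * c (k - 1) + 1)) :
    ∀ k ≤ m, c k = 2 * k + 1 := by
  intro k hk
  rw [eq_add_two_mul_of_succ_eq_add_two
    (succ_eq_add_two_of_frieze_relations hm hpos htop hmid) k hk, h0]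
  ring
end

section
/- Suppose positive reals x₁, y₁, x₃, y₃, …, x_{2m−1}, y_{2m−1} satisfy x_{2k−1}·y_{2k−1} = 4k² and x_{2k−1}·y_{2k+1} = x_{2k+1}·y_{2k−1} = 4k(k+1) for all admissible k. Then x_{2k−1} = k·x₁ and y_{2k−1} = k·y₁ for all 1 ≤ k ≤ m. -/
/-!
Induction on `k`: if `y_{2n−1} = n·y₁` then `x_{2n+1}·n·y₁ = 4n(n+1) = n(n+1)·x₁y₁`,
and cancelling `n·y₁ ≠ 0` gives `x_{2n+1} = (n+1)·x₁`; the argument for `y` is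
symmetric. Here `x k` stands for `x_{2k−1}` and `y k` for `y_{2k−1}`.
-/

theorem eq_add_one_mul_of_mul_eq {R : Type*} [CommRing R] [IsDomain R] {a₁ b₁ a n c : R}
    (h₁ : a₁ * b₁ = c) (h : a * (n * b₁) = c * n * (n + 1)) (hn : n ≠ 0) (hb₁ : b₁ ≠ 0) :
    a = (n + 1) * a₁ :=
  mul_right_cancel₀ (mul_ne_zero hn hb₁) (by rw [h, ← h₁]; ring)

theorem Deven_odd_layers_general (m : ℕ) (hm : 1 ≤ m) (x y : ℕ → ℝ)
    (h1 : ∀ k, 1 ≤ k → k ≤ m → x k * y k = 4 * k ^ 2)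
    (h2 : ∀ k, 1 ≤ k → k + 1 ≤ m →
      x k * y (k + 1) = 4 * k * (k + 1) ∧ x (k + 1) * y k = 4 * k * (k + 1)) :
    ∀ k, 1 ≤ k → k ≤ m → x k = k * x 1 ∧ y k = k * y 1 := by
  have h11 : x 1 * y 1 = 4 := by simpa using h1 1 le_rfl hm
  have h11' : y 1 * x 1 = 4 := by rwa [mul_comm] at h11
  have h11_ne : x 1 * y 1 ≠ 0 := by rw [h11]; norm_num
  intro k hk
  induction k, hk using Nat.le_induction with
  | base => simp
  | succ n hn ih =>
    intro hnm
    obtain ⟨hxn, hyn⟩ := ih (by omega)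
    obtain ⟨hxy, hyx⟩ := h2 n hn hnm
    have hn0 : (n : ℝ) ≠ 0 := Nat.cast_ne_zero.mpr (by omega)
    push_cast
    constructor
    · exact eq_add_one_mul_of_mul_eq h11 (hyn ▸ hyx) hn0 (right_ne_zero_of_mul h11_ne)
    · exact eq_add_one_mul_of_mul_eq h11' (by rw [mul_comm, ← hxn, hxy])
        hn0 (left_ne_zero_of_mul h11_ne)

/-- The odd layers of a 2-periodic positive frieze of type `D_n`, `n` even: here `x k`
stands for `x_{2k−1}` and `y k` for `y_{2k−1}`, for `1 ≤ k ≤ m`. The relations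
`x_{2k−1}y_{2k−1} = 4k²` and `x_{2k−1}y_{2k+1} = x_{2k+1}y_{2k−1} = 4k(k+1)` force
`x_{2k−1} = k·x₁` and `y_{2k−1} = k·y₁`. -/
theorem Deven_odd_layers (m : ℕ) (hm : 1 ≤ m) (x y : ℕ → ℝ)
    (hpos : ∀ k, 1 ≤ k → k ≤ m → 0 < x k ∧ 0 < y k)
    (h1 : ∀ k, 1 ≤ k → k ≤ m → x k * y k = 4 * k ^ 2)
    (h2 : ∀ k, 1 ≤ k → k + 1 ≤ m →
      x k * y (k + 1) = 4 * k * (k + 1) ∧ x (k + 1) * y k = 4 * k * (k + 1)) :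
    ∀ k, 1 ≤ k → k ≤ m → x k = k * x 1 ∧ y k = k * y 1 :=
  Deven_odd_layers_general m hm x y h1 h2
end

section
/- Let n = 2m+2 be even. The 2-periodic positive real friezes of type D_n form a two-parameter family: the solutions of the reduced system x₁y₁ = 4, x₊y₊ = x₋y₋ = n, x₁x₊x₋ = y₁y₊y₋ in positive reals are exactly parametrized by choosing (x₊, y₊) with x₊y₊ = n and (x₋, y₋) with x₋y₋ = n, with x₁ = 2n/(x₊x₋) and y₁ = 2n/(y₊y₋); moreover these equations imply x₁x₊x₋ = y₁y₊y₋ = 2n. -/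
/-! With `P = x₁x₊x₋` and `Q = y₁y₊y₋`, the fork equations give `P * Q = x₁y₁ · n²`. Hence
`x₁y₁ = 4` and `P = Q` force `P² = (2n)²`, i.e. `P = Q = 2n` by positivity; conversely
`P = Q = 2n` gives `x₁y₁ · n² = 4n²`, i.e. `x₁y₁ = 4`. As `n ≠ 0` makes `x₊x₋` and `y₊y₋` nonzero,
`P = Q = 2n` is the same as `x₁ = 2n/(x₊x₋)` and `y₁ = 2n/(y₊y₋)`. -/

section Field

variable {K : Type*} [Field K] {n x₁ y₁ xp yp xm ym : K}

theorem fork_products_mul (hp : xp * yp = n) (hm : xm * ym = n) :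
    (x₁ * xp * xm) * (y₁ * yp * ym) = x₁ * y₁ * n ^ 2 := by
  calc (x₁ * xp * xm) * (y₁ * yp * ym) = x₁ * y₁ * ((xp * yp) * (xm * ym)) := by ring
    _ = x₁ * y₁ * n ^ 2 := by rw [hp, hm, sq]

theorem mul_eq_four_of_fork_products (hn : n ≠ 0) (hp : xp * yp = n) (hm : xm * ym = n)
    (hx : x₁ * xp * xm = 2 * n) (hy : y₁ * yp * ym = 2 * n) : x₁ * y₁ = 4 := by
  have h : x₁ * y₁ * n ^ 2 = 4 * n ^ 2 := by
    rw [← fork_products_mul hp hm, hx, hy]; ring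
  exact mul_right_cancel₀ (pow_ne_zero 2 hn) h

theorem eq_div_fork_iff (hn : n ≠ 0) (hp : xp * yp = n) (hm : xm * ym = n) :
    (x₁ = 2 * n / (xp * xm) ∧ y₁ = 2 * n / (yp * ym)) ↔
      (x₁ * xp * xm = 2 * n ∧ y₁ * yp * ym = 2 * n) := by
  have hxpm : xp * xm ≠ 0 := mul_ne_zero (left_ne_zero_of_mul (hp ▸ hn))
    (left_ne_zero_of_mul (hm ▸ hn))
  have hypm : yp * ym ≠ 0 := mul_ne_zero (right_ne_zero_of_mul (hp ▸ hn))
    (right_ne_zero_of_mul (hm ▸ hn))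
  rw [eq_div_iff hxpm, eq_div_iff hypm, ← mul_assoc, ← mul_assoc]

end Field

theorem fork_product_eq_two_mul {K : Type*} [Field K] [LinearOrder K] [IsStrictOrderedRing K]
    {n x₁ y₁ xp yp xm ym : K} (hn : 0 ≤ n) (hP : 0 < x₁ * xp * xm) (h₁ : x₁ * y₁ = 4)
    (hp : xp * yp = n) (hm : xm * ym = n) (he : x₁ * xp * xm = y₁ * yp * ym) :
    x₁ * xp * xm = 2 * n := by
  have hsq : (x₁ * xp * xm) ^ 2 = (2 * n) ^ 2 := by
    calc (x₁ * xp * xm) ^ 2 = (x₁ * xp * xm) * (y₁ * yp * ym) := by rw [sq, ← he]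
      _ = (2 * n) ^ 2 := by rw [fork_products_mul hp hm, h₁]; ring
  exact (pow_left_inj₀ hP.le (by positivity) two_ne_zero).1 hsq

theorem Deven_two_parameter_family_general (m : ℕ)
    (x₁ y₁ xp yp xm ym : ℝ)
    (hx₁ : 0 < x₁) (hxp : 0 < xp)
    (hxm : 0 < xm) :
    ((x₁ * y₁ = 4 ∧ xp * yp = (2 * m + 2 : ℝ) ∧ xm * ym = (2 * m + 2 : ℝ) ∧
        x₁ * xp * xm = y₁ * yp * ym) ↔
      (xp * yp = (2 * m + 2 : ℝ) ∧ xm * ym = (2 * m + 2 : ℝ) ∧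
        x₁ = 2 * (2 * m + 2 : ℝ) / (xp * xm) ∧ y₁ = 2 * (2 * m + 2 : ℝ) / (yp * ym))) ∧
    ((x₁ * y₁ = 4 ∧ xp * yp = (2 * m + 2 : ℝ) ∧ xm * ym = (2 * m + 2 : ℝ) ∧
        x₁ * xp * xm = y₁ * yp * ym) →
      x₁ * xp * xm = 2 * (2 * m + 2 : ℝ) ∧ y₁ * yp * ym = 2 * (2 * m + 2 : ℝ)) := by
  have hn : (0 : ℝ) < 2 * m + 2 := by positivity
  have forks : x₁ * y₁ = 4 ∧ xp * yp = (2 * m + 2 : ℝ) ∧ xm * ym = (2 * m + 2 : ℝ) ∧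
      x₁ * xp * xm = y₁ * yp * ym →
      x₁ * xp * xm = 2 * (2 * m + 2 : ℝ) ∧ y₁ * yp * ym = 2 * (2 * m + 2 : ℝ) := by
    rintro ⟨h₁, hp, hm, he⟩
    have hP := fork_product_eq_two_mul hn.le (by positivity) h₁ hp hm he
    exact ⟨hP, he ▸ hP⟩
  refine ⟨⟨fun h => ?_, fun ⟨hp, hm, hxy⟩ => ?_⟩, forks⟩
  · have ⟨_, hp, hm, _⟩ := h
    exact ⟨hp, hm, (eq_div_fork_iff hn.ne' hp hm).2 (forks h)⟩
  · obtain ⟨hx, hy⟩ := (eq_div_fork_iff hn.ne' hp hm).1 hxy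
    exact ⟨mul_eq_four_of_fork_products hn.ne' hp hm hx hy, hp, hm, hx.trans hy.symm⟩

/-- For `n = 2m+2` even, the reduced system `x₁y₁ = 4`, `x₊y₊ = x₋y₋ = n`,
`x₁x₊x₋ = y₁y₊y₋` in positive reals is exactly parametrized by the choices of
`(x₊, y₊)` with `x₊y₊ = n` and `(x₋, y₋)` with `x₋y₋ = n`, via `x₁ = 2n/(x₊x₋)`,
`y₁ = 2n/(y₊y₋)`; moreover the equations imply `x₁x₊x₋ = y₁y₊y₋ = 2n`. -/
theorem Deven_two_parameter_family (m : ℕ) (hm : 1 ≤ m)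
    (x₁ y₁ xp yp xm ym : ℝ)
    (hx₁ : 0 < x₁) (hy₁ : 0 < y₁) (hxp : 0 < xp) (hyp : 0 < yp)
    (hxm : 0 < xm) (hym : 0 < ym) :
    ((x₁ * y₁ = 4 ∧ xp * yp = (2 * m + 2 : ℝ) ∧ xm * ym = (2 * m + 2 : ℝ) ∧
        x₁ * xp * xm = y₁ * yp * ym) ↔
      (xp * yp = (2 * m + 2 : ℝ) ∧ xm * ym = (2 * m + 2 : ℝ) ∧
        x₁ = 2 * (2 * m + 2 : ℝ) / (xp * xm) ∧ y₁ = 2 * (2 * m + 2 : ℝ) / (yp * ym))) ∧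
    ((x₁ * y₁ = 4 ∧ xp * yp = (2 * m + 2 : ℝ) ∧ xm * ym = (2 * m + 2 : ℝ) ∧
        x₁ * xp * xm = y₁ * yp * ym) →
      x₁ * xp * xm = 2 * (2 * m + 2 : ℝ) ∧ y₁ * yp * ym = 2 * (2 * m + 2 : ℝ)) :=
  Deven_two_parameter_family_general m x₁ y₁ xp yp xm ym hx₁ hxp hxm
end
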